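/- Let n be the number of validators and let M be a finite set of slot votes, i.e., pairs (v, χ) of a validator and a chain. Call a validator equivocating in M if it appears in M with two distinct chains, and suppose the set E of equivocating validators satisfies 3·|E| < n. Let χ₁ and χ₂ be chains, and suppose there are validator sets Q₁ and Q₂, each with 3·|Qᵢ| ≥ 2n, such that every v ∈ Q₁ has some vote (v, χ) ∈ M with χ₁ ≼ χ, and every v ∈ Q₂ has some vote (v, χ) ∈ M with χ₂ ≼ χ. Then χ₁ ≼ χ₂ or χ₂ ≼ χ₁. -/
import Mathlib


/-- **No conflicting quorum certificates under `< n/3` equivocation.** Let `M` be a finite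
set of slot votes `(validator, chain)`. If fewer than `n/3` validators equivocate in `M`
(appear with two distinct chains), then any two chains each supported (as a prefix of the
voted chain) by at least `2n/3` validators are comparable under the prefix order. -/
theorem no_conflicting_quorums {β : Type} [DecidableEq β] (n : ℕ)
    (M : Finset (Fin n × List β))
    (hE : 3 * {v : Fin n | ∃ χ χ' : List β, (v, χ) ∈ M ∧ (v, χ') ∈ M ∧ χ ≠ χ'}.ncard < n)
    (χ₁ χ₂ : List β) (Q₁ Q₂ : Finset (Fin n))
    (hQ₁ : 2 * n ≤ 3 * Q₁.card) (hQ₂ : 2 * n ≤ 3 * Q₂.card)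
    (h₁ : ∀ v ∈ Q₁, ∃ χ : List β, (v, χ) ∈ M ∧ χ₁ <+: χ)
    (h₂ : ∀ v ∈ Q₂, ∃ χ : List β, (v, χ) ∈ M ∧ χ₂ <+: χ) :
    χ₁ <+: χ₂ ∨ χ₂ <+: χ₁ := by
  set E : Set (Fin n) := {v : Fin n | ∃ χ χ' : List β, (v, χ) ∈ M ∧ (v, χ') ∈ M ∧ χ ≠ χ'}
    with hEdef
  have hfin : E.Finite := Set.toFinite E
  have hunion : (Q₁ ∪ Q₂).card ≤ n := by
    simpa using Finset.card_le_univ (Q₁ ∪ Q₂)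
  have hsum := Finset.card_union_add_card_inter Q₁ Q₂
  have hI : E.ncard < (Q₁ ∩ Q₂).card := by omega
  have hns : ¬ ((Q₁ ∩ Q₂ : Finset (Fin n)) : Set (Fin n)) ⊆ E := by
    intro hsub
    have := Set.ncard_le_ncard hsub hfin
    rw [Set.ncard_coe_finset] at this
    omega
  obtain ⟨v, hvI, hvE⟩ := Set.not_subset.mp hns
  simp only [Finset.coe_inter, Set.mem_inter_iff, Finset.mem_coe] at hvI
  obtain ⟨χ, hχM, hpre1⟩ := h₁ v hvI.1
  obtain ⟨χ', hχ'M, hpre2⟩ := h₂ v hvI.2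
  have hceq : χ = χ' := by
    by_contra hne
    exact hvE ⟨χ, χ', hχM, hχ'M, hne⟩
  subst hceq
  exact List.prefix_or_prefix_of_prefix hpre1 hpre2
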